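/- arXiv:2212.10821 — 4 statements merged into one kernel-verified Lean document; each statement's English description precedes it below -/
import Mathlib

section
/- Let H, C : [0,∞) → Matrix (Fin n) (Fin n) ℂ be continuous with H(t) Hermitian positive definite and C(t) Hermitian with minimal eigenvalue c_min(t) > 0. Suppose y : [0,∞) → ℂⁿ is differentiable and d/dt ⟨H(t)y(t), y(t)⟩ = -⟨C(t)y(t), y(t)⟩. Then ⟨H(t)y(t), y(t)⟩ ≤ exp(-∫₀ᵗ c_min(s)/‖H(s)‖ ds) · ⟨H(0)y(0), y(0)⟩ for t ≥ 0. -/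
/-!
Write `V t = ⟨H(t) y(t), y(t)⟩`. The Rayleigh bound `⟨C y, y⟩ ≥ c_min ‖y‖²` and the operator-norm
bound `⟨H y, y⟩ ≤ ‖H‖ ‖y‖²` turn the energy identity into `V' ≤ -(c_min / ‖H‖) V`, so
`V t · exp (∫₀ᵗ c_min / ‖H‖)` is nonincreasing. For the exponent to be a true primitive the rate
`c_min / ‖H‖` must be continuous; this holds because the least eigenvalue of a Hermitian matrix
moves by at most the operator norm of the perturbation.
-/

open Matrix
open scoped ComplexOrder intervalIntegral
open scoped Matrix.Norms.L2Operator

open Set Real in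
theorem le_exp_neg_integral_mul_of_deriv_le {V v f : ℝ → ℝ} {a b : ℝ} (hab : a ≤ b)
    (hf : ContinuousOn f (Icc a b)) (hVc : ContinuousOn V (Icc a b))
    (hV : ∀ s ∈ Ioo a b, HasDerivAt V (v s) s) (hv : ∀ s ∈ Ioo a b, v s ≤ -(f s * V s)) :
    V b ≤ exp (-∫ s in a..b, f s) * V a := by
  set G : ℝ → ℝ := fun u => ∫ s in a..u, f s
  have hGc : ContinuousOn G (Icc a b) := by
    rw [← uIcc_of_le hab] at hf ⊢
    exact intervalIntegral.continuousOn_primitive_interval hf.integrableOn_Icc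
  have hG : ∀ s ∈ Ioo a b, HasDerivAt G (f s) s := fun s hs =>
    intervalIntegral.integral_hasDerivAt_right
      (hf.mono <| by
        simpa [uIcc_of_le hs.1.le] using Icc_subset_Icc_right hs.2.le).intervalIntegrable
      ((hf.mono Ioo_subset_Icc_self).stronglyMeasurableAtFilter isOpen_Ioo s hs)
      (hf.continuousAt (Icc_mem_nhds hs.1 hs.2))
  have hW : AntitoneOn (fun u => V u * exp (G u)) (Icc a b) := by
    refine antitoneOn_of_hasDerivWithinAt_nonpos (convex_Icc a b)
      (f' := fun s => v s * exp (G s) + V s * (exp (G s) * f s)) (hVc.mul hGc.rexp)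
      (fun s hs => ?_) (fun s hs => ?_)
    · rw [interior_Icc] at hs ⊢
      exact ((hV s hs).mul (hG s hs).exp).hasDerivWithinAt
    · rw [interior_Icc] at hs
      nlinarith [hv s hs, exp_pos (G s)]
  have := hW (left_mem_Icc.2 hab) (right_mem_Icc.2 hab) hab
  simp only [G, intervalIntegral.integral_same, exp_zero, mul_one] at this
  rwa [Real.exp_neg, inv_mul_eq_div, le_div_iff₀ (exp_pos _)]

namespace Matrix
variable {𝕜 ι : Type*} [RCLike 𝕜] [Fintype ι]

theorem re_star_dotProduct_self (x : ι → 𝕜) :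
    RCLike.re (star x ⬝ᵥ x) = ‖WithLp.toLp 2 x‖ ^ 2 := by
  rw [← inner_self_eq_norm_sq (𝕜 := 𝕜), EuclideanSpace.inner_toLp_toLp, dotProduct_comm]

variable [DecidableEq ι]

open scoped MatrixOrder in
theorem IsHermitian.mul_re_dotProduct_le {A : Matrix ι ι 𝕜} (hA : A.IsHermitian) {μ : ℝ}
    (hμ : ∀ i, μ ≤ hA.eigenvalues i) (x : ι → 𝕜) :
    μ * RCLike.re (star x ⬝ᵥ x) ≤ RCLike.re (star x ⬝ᵥ A *ᵥ x) := by
  have hle : algebraMap ℝ (Matrix ι ι 𝕜) μ ≤ A := by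
    rw [algebraMap_le_iff_le_spectrum hA.isSelfAdjoint, hA.spectrum_real_eq_range_eigenvalues]
    rintro _ ⟨i, rfl⟩
    exact hμ i
  have := (le_iff.mp hle).re_dotProduct_nonneg x
  simpa [Algebra.algebraMap_eq_smul_one, sub_mulVec, smul_mulVec, dotProduct_smul,
    RCLike.smul_re] using this

theorem re_dotProduct_mulVec_le (A : Matrix ι ι 𝕜) (x : ι → 𝕜) :
    RCLike.re (star x ⬝ᵥ A *ᵥ x) ≤ ‖A‖ * RCLike.re (star x ⬝ᵥ x) := by
  calc RCLike.re (star x ⬝ᵥ A *ᵥ x)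
      = RCLike.re (inner 𝕜 (WithLp.toLp 2 x) (WithLp.toLp 2 (A *ᵥ x))) := by
        rw [EuclideanSpace.inner_toLp_toLp, dotProduct_comm]
    _ ≤ ‖WithLp.toLp 2 x‖ * ‖WithLp.toLp 2 (A *ᵥ x)‖ := re_inner_le_norm _ _
    _ ≤ ‖WithLp.toLp 2 x‖ * (‖A‖ * ‖WithLp.toLp 2 x‖) := by
        gcongr; exact l2_opNorm_mulVec A (WithLp.toLp 2 x)
    _ = ‖A‖ * RCLike.re (star x ⬝ᵥ x) := by rw [re_star_dotProduct_self]; ring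

theorem IsHermitian.sub_le_norm_sub {A B : Matrix ι ι 𝕜} (hA : A.IsHermitian)
    (hB : B.IsHermitian) {a b : ℝ} (ha : ∀ i, a ≤ hA.eigenvalues i)
    (hb : b ∈ Set.range hB.eigenvalues) : a - b ≤ ‖A - B‖ := by
  obtain ⟨i, rfl⟩ := hb
  set v : ι → 𝕜 := ⇑(hB.eigenvectorBasis i)
  have hv : RCLike.re (star v ⬝ᵥ v) = 1 := by
    rw [re_star_dotProduct_self, WithLp.toLp_ofLp, hB.eigenvectorBasis.orthonormal.1 i, one_pow]
  have hAv := hA.mul_re_dotProduct_le ha v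
  have hABv := re_dotProduct_mulVec_le (A - B) v
  rw [hv, mul_one] at hAv hABv
  rw [hB.eigenvalues_eq i]
  simp only [sub_mulVec, dotProduct_sub, map_sub] at hABv
  linarith

theorem continuousOn_of_isLeast_eigenvalues {X : Type*} [TopologicalSpace X] {s : Set X}
    {C : X → Matrix ι ι 𝕜} (hC : ContinuousOn C s) (hherm : ∀ x ∈ s, (C x).IsHermitian)
    {c : X → ℝ} (hc : ∀ x (hx : x ∈ s), IsLeast (Set.range (hherm x hx).eigenvalues) (c x)) :
    ContinuousOn c s := by
  intro x hx
  have hdist : ∀ y ∈ s, ‖c y - c x‖ ≤ ‖C y - C x‖ := by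
    intro y hy
    rw [Real.norm_eq_abs, abs_sub_le_iff]
    constructor
    · exact (hherm y hy).sub_le_norm_sub (hherm x hx) (fun i => (hc y hy).2 ⟨i, rfl⟩) (hc x hx).1
    · rw [norm_sub_rev]
      exact (hherm x hx).sub_le_norm_sub (hherm y hy) (fun i => (hc x hx).2 ⟨i, rfl⟩) (hc y hy).1
  exact tendsto_iff_norm_sub_tendsto_zero.mpr <| squeeze_zero' (by simp)
    (eventually_nhdsWithin_of_forall hdist) (tendsto_iff_norm_sub_tendsto_zero.mp (hC x hx))

theorem IsHermitian.mul_re_dotProduct_le_norm_mul (A : Matrix ι ι 𝕜) {B : Matrix ι ι 𝕜}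
    (hB : B.IsHermitian) {μ : ℝ} (hμ₀ : 0 ≤ μ) (hμ : ∀ i, μ ≤ hB.eigenvalues i) (x : ι → 𝕜) :
    μ * RCLike.re (star x ⬝ᵥ A *ᵥ x) ≤ ‖A‖ * RCLike.re (star x ⬝ᵥ B *ᵥ x) :=
  calc μ * RCLike.re (star x ⬝ᵥ A *ᵥ x)
      ≤ μ * (‖A‖ * RCLike.re (star x ⬝ᵥ x)) := by gcongr; exact re_dotProduct_mulVec_le A x
    _ = ‖A‖ * (μ * RCLike.re (star x ⬝ᵥ x)) := by ring
    _ ≤ ‖A‖ * RCLike.re (star x ⬝ᵥ B *ᵥ x) := by gcongr; exact hB.mul_re_dotProduct_le hμ x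

theorem PosDef.ne_zero [Nonempty ι] {A : Matrix ι ι 𝕜} (hA : A.PosDef) : A ≠ 0 := by
  rintro rfl
  simpa using hA.det_pos

end Matrix

theorem krein_type_estimate_inner_general (n : ℕ)
    (H C : ℝ → Matrix (Fin n) (Fin n) ℂ)
    (hHcont : ContinuousOn H (Set.Ici (0:ℝ))) (hCcont : ContinuousOn C (Set.Ici (0:ℝ)))
    (hHpos : ∀ t ≥ (0:ℝ), (H t).PosDef)
    (hCherm : ∀ t ≥ (0:ℝ), (C t).IsHermitian)
    (cmin : ℝ → ℝ)
    (hcmin : ∀ t (ht : t ≥ (0:ℝ)),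
      IsLeast (Set.range (hCherm t ht).eigenvalues) (cmin t))
    (hcminpos : ∀ t ≥ (0:ℝ), 0 < cmin t)
    (y : ℝ → Fin n → ℂ)
    (hident : ∀ t ≥ (0:ℝ),
      HasDerivAt (fun s => (star (y s) ⬝ᵥ (H s).mulVec (y s)).re)
        (-(star (y t) ⬝ᵥ (C t).mulVec (y t)).re) t) :
    ∀ t ≥ (0:ℝ),
      (star (y t) ⬝ᵥ (H t).mulVec (y t)).re
        ≤ Real.exp (-∫ s in (0:ℝ)..t, cmin s / ‖H s‖)
            * (star (y 0) ⬝ᵥ (H 0).mulVec (y 0)).re := by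
  intro t ht
  have : Nonempty (Fin n) := ⟨(hcmin 0 le_rfl).1.choose⟩
  have hHnorm : ∀ s ≥ (0:ℝ), 0 < ‖H s‖ := fun s hs => norm_pos_iff.2 (hHpos s hs).ne_zero
  have hcminc : ContinuousOn cmin (Set.Ici 0) :=
    continuousOn_of_isLeast_eigenvalues hCcont hCherm hcmin
  have hrate : ContinuousOn (fun s => cmin s / ‖H s‖) (Set.Ici 0) :=
    hcminc.div hHcont.norm fun s hs => (hHnorm s hs).ne'
  refine le_exp_neg_integral_mul_of_deriv_le ht (hrate.mono Set.Icc_subset_Ici_self)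
    (fun s hs => (hident s hs.1).continuousAt.continuousWithinAt)
    (fun s hs => hident s hs.1.le) fun s hs => ?_
  have hs : 0 ≤ s := hs.1.le
  have hquad := (hCherm s hs).mul_re_dotProduct_le_norm_mul (H s) (hcminpos s hs).le
    (fun i => (hcmin s hs).2 ⟨i, rfl⟩) (y s)
  rw [div_mul_eq_mul_div, neg_le_neg_iff, div_le_iff₀' (hHnorm s hs)]
  exact hquad

theorem krein_type_estimate_inner (n : ℕ)
    (H C : ℝ → Matrix (Fin n) (Fin n) ℂ)
    (hHcont : ContinuousOn H (Set.Ici (0:ℝ))) (hCcont : ContinuousOn C (Set.Ici (0:ℝ)))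
    (hHpos : ∀ t ≥ (0:ℝ), (H t).PosDef)
    (hCherm : ∀ t ≥ (0:ℝ), (C t).IsHermitian)
    (cmin : ℝ → ℝ)
    (hcmin : ∀ t (ht : t ≥ (0:ℝ)),
      IsLeast (Set.range (hCherm t ht).eigenvalues) (cmin t))
    (hcminpos : ∀ t ≥ (0:ℝ), 0 < cmin t)
    (y : ℝ → Fin n → ℂ)
    (hydiff : Differentiable ℝ y)
    (hident : ∀ t ≥ (0:ℝ),
      HasDerivAt (fun s => (star (y s) ⬝ᵥ (H s).mulVec (y s)).re)
        (-(star (y t) ⬝ᵥ (C t).mulVec (y t)).re) t) :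
    ∀ t ≥ (0:ℝ),
      (star (y t) ⬝ᵥ (H t).mulVec (y t)).re
        ≤ Real.exp (-∫ s in (0:ℝ)..t, cmin s / ‖H s‖)
            * (star (y 0) ⬝ᵥ (H 0).mulVec (y 0)).re :=
  krein_type_estimate_inner_general n H C hHcont hCcont hHpos hCherm cmin hcmin hcminpos y hident
end

section
/- Under the hypotheses of the previous statement, with h_min(t) > 0 the minimal eigenvalue of H(t), solutions satisfy ‖y(t)‖² ≤ (‖H(0)‖/h_min(t)) ‖y(0)‖² exp(-∫₀ᵗ c_min(s)/‖H(s)‖ ds) for t ≥ 0. -/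
/-!
Along a solution, the energy `V(t) = ⟨H(t)y(t), y(t)⟩` is squeezed between
`h_min(t)‖y(t)‖²` and `‖H(t)‖‖y(t)‖²`, while `c_min(t)‖y‖² ≤ ⟨C y, y⟩`. Hence
`V' = -⟨C y, y⟩ ≤ -(c_min/‖H‖) V`, and Gronwall's argument (the product
`V(t) exp(∫₀ᵗ c_min/‖H‖)` is antitone) gives `V(t) ≤ V(0) exp(-∫₀ᵗ c_min/‖H‖)`; the energy
bounds at `0` and `t` turn this into the estimate for `‖y(t)‖²`. The exponent is continuous
because the least eigenvalue of a Hermitian matrix is `1`-Lipschitz in the operator norm.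
-/

open Matrix Set Filter Topology
open scoped ComplexOrder intervalIntegral
open scoped Matrix.Norms.L2Operator MatrixOrder

theorem le_mul_exp_neg_integral_of_hasDerivAt_le {V V' k : ℝ → ℝ} {a b : ℝ} (hab : a ≤ b)
    (hV : ContinuousOn V (Icc a b)) (hk : ContinuousOn k (Icc a b))
    (hV' : ∀ s ∈ Ioo a b, HasDerivAt V (V' s) s) (hle : ∀ s ∈ Ioo a b, V' s ≤ -(k s * V s)) :
    V b ≤ V a * Real.exp (-∫ s in a..b, k s) := by
  set K : ℝ → ℝ := fun s ↦ ∫ u in a..s, k u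
  have hK : ContinuousOn K (Icc a b) := by
    simpa only [uIcc_of_le hab] using intervalIntegral.continuousOn_primitive_interval
      (hk.mono (uIcc_of_le hab).subset).integrableOn_uIcc
  have hK' : ∀ s ∈ Ioo a b, HasDerivAt K (k s) s := fun s hs ↦
    intervalIntegral.integral_hasDerivAt_right
      ((hk.mono (Icc_subset_Icc_right hs.2.le)).intervalIntegrable_of_Icc hs.1.le)
      ((hk.mono Ioo_subset_Icc_self).stronglyMeasurableAtFilter isOpen_Ioo s hs)
      (hk.continuousAt (Icc_mem_nhds hs.1 hs.2))
  have hanti : AntitoneOn (fun s ↦ V s * Real.exp (K s)) (Icc a b) := by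
    refine antitoneOn_of_hasDerivWithinAt_nonpos
      (f' := fun s ↦ V' s * Real.exp (K s) + V s * (Real.exp (K s) * k s)) (convex_Icc a b)
      (hV.mul (Real.continuous_exp.comp_continuousOn hK)) (fun s hs ↦ ?_) (fun s hs ↦ ?_)
    · rw [interior_Icc] at hs
      exact ((hV' s hs).mul (hK' s hs).exp).hasDerivWithinAt
    · rw [interior_Icc] at hs
      have := mul_le_mul_of_nonneg_right (hle s hs) (Real.exp_pos (K s)).le
      linarith
  have h := hanti (left_mem_Icc.2 hab) (right_mem_Icc.2 hab) hab
  simp only [K, intervalIntegral.integral_same, Real.exp_zero, mul_one] at h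
  calc V b = V b * Real.exp (K b) * Real.exp (-K b) := by
        rw [mul_assoc, ← Real.exp_add, add_neg_cancel, Real.exp_zero, mul_one]
    _ ≤ V a * Real.exp (-K b) := by gcongr

namespace Matrix

variable {ι 𝕜 : Type*} [Fintype ι] [RCLike 𝕜]

theorem re_star_dotProduct_mulVec_le_of_le {A B : Matrix ι ι 𝕜} (h : A ≤ B) (x : ι → 𝕜) :
    RCLike.re (star x ⬝ᵥ A *ᵥ x) ≤ RCLike.re (star x ⬝ᵥ B *ᵥ x) := by
  have := (le_iff.1 h).dotProduct_mulVec_nonneg x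
  rw [sub_mulVec, dotProduct_sub, sub_nonneg] at this
  exact RCLike.re_le_re this

theorem re_star_dotProduct_algebraMap_mulVec [DecidableEq ι] (μ : ℝ) (x : ι → 𝕜) :
    RCLike.re (star x ⬝ᵥ algebraMap ℝ (Matrix ι ι 𝕜) μ *ᵥ x) = μ * RCLike.re (star x ⬝ᵥ x) := by
  rw [Algebra.algebraMap_eq_smul_one, smul_mulVec, one_mulVec, dotProduct_smul, RCLike.smul_re]

end Matrix

namespace Matrix.IsHermitian

variable {ι : Type*} [Fintype ι] [DecidableEq ι] {A B : Matrix ι ι ℂ}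

theorem algebraMap_le_iff_forall_le_eigenvalues (hA : A.IsHermitian) {μ : ℝ} :
    algebraMap ℝ _ μ ≤ A ↔ ∀ i, μ ≤ hA.eigenvalues i := by
  rw [algebraMap_le_iff_le_spectrum hA.isSelfAdjoint, hA.spectrum_real_eq_range_eigenvalues,
    forall_mem_range]

theorem le_algebraMap_iff_forall_eigenvalues_le (hA : A.IsHermitian) {μ : ℝ} :
    A ≤ algebraMap ℝ _ μ ↔ ∀ i, hA.eigenvalues i ≤ μ := by
  rw [le_algebraMap_iff_spectrum_le hA.isSelfAdjoint, hA.spectrum_real_eq_range_eigenvalues,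
    forall_mem_range]

theorem eigenvalues_le_norm (hA : A.IsHermitian) (i : ι) : hA.eigenvalues i ≤ ‖A‖ :=
  hA.le_algebraMap_iff_forall_eigenvalues_le.1 hA.isSelfAdjoint.le_algebraMap_norm_self i

theorem mul_re_le_re_star_dotProduct_mulVec (hA : A.IsHermitian) {μ : ℝ}
    (hμ : ∀ i, μ ≤ hA.eigenvalues i) (x : ι → ℂ) :
    μ * (star x ⬝ᵥ x).re ≤ (star x ⬝ᵥ A *ᵥ x).re := by
  simpa only [re_star_dotProduct_algebraMap_mulVec, RCLike.re_to_complex] using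
    re_star_dotProduct_mulVec_le_of_le (hA.algebraMap_le_iff_forall_le_eigenvalues.2 hμ) x

theorem re_star_dotProduct_mulVec_le_norm_mul (hA : A.IsHermitian) (x : ι → ℂ) :
    (star x ⬝ᵥ A *ᵥ x).re ≤ ‖A‖ * (star x ⬝ᵥ x).re := by
  simpa only [re_star_dotProduct_algebraMap_mulVec, RCLike.re_to_complex] using
    re_star_dotProduct_mulVec_le_of_le hA.isSelfAdjoint.le_algebraMap_norm_self x

theorem div_norm_mul_re_le_re_star_dotProduct_mulVec (hA : A.IsHermitian) (hB : B.IsHermitian)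
    {c : ℝ} (hc : 0 ≤ c) (hcB : ∀ i, c ≤ hB.eigenvalues i) (x : ι → ℂ) :
    c / ‖A‖ * (star x ⬝ᵥ A *ᵥ x).re ≤ (star x ⬝ᵥ B *ᵥ x).re := by
  have hB' := hB.mul_re_le_re_star_dotProduct_mulVec hcB x
  rcases (norm_nonneg A).eq_or_lt with hA0 | hA0
  · have hx : 0 ≤ (star x ⬝ᵥ x).re := Complex.nonneg_iff.1 (dotProduct_star_self_nonneg x) |>.1
    rw [← hA0, div_zero, zero_mul]
    exact (mul_nonneg hc hx).trans hB'
  calc c / ‖A‖ * (star x ⬝ᵥ A *ᵥ x).re ≤ c / ‖A‖ * (‖A‖ * (star x ⬝ᵥ x).re) := by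
        gcongr
        exact hA.re_star_dotProduct_mulVec_le_norm_mul x
    _ = c * (star x ⬝ᵥ x).re := by field_simp
    _ ≤ (star x ⬝ᵥ B *ᵥ x).re := hB'

theorem le_add_norm_sub_of_isLeast (hA : A.IsHermitian) (hB : B.IsHermitian) {a b : ℝ}
    (ha : IsLeast (range hA.eigenvalues) a) (hb : IsLeast (range hB.eigenvalues) b) :
    b ≤ a + ‖B - A‖ := by
  have hbB : algebraMap ℝ _ b ≤ B :=
    hB.algebraMap_le_iff_forall_le_eigenvalues.2 fun i ↦ hb.2 ⟨i, rfl⟩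
  have hBA : B - A ≤ algebraMap ℝ _ ‖B - A‖ := (hB.sub hA).isSelfAdjoint.le_algebraMap_norm_self
  have hA' : algebraMap ℝ _ (b - ‖B - A‖) ≤ A := by
    rw [map_sub, sub_le_iff_le_add']
    calc algebraMap ℝ _ b ≤ B := hbB
      _ = (B - A) + A := (sub_add_cancel B A).symm
      _ ≤ algebraMap ℝ _ ‖B - A‖ + A := add_le_add_left hBA A
  obtain ⟨i, rfl⟩ := ha.1
  linarith [hA.algebraMap_le_iff_forall_le_eigenvalues.1 hA' i]

theorem dist_le_dist_of_isLeast (hA : A.IsHermitian) (hB : B.IsHermitian) {a b : ℝ}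
    (ha : IsLeast (range hA.eigenvalues) a) (hb : IsLeast (range hB.eigenvalues) b) :
    dist a b ≤ dist A B := by
  rw [Real.dist_eq, dist_eq_norm, abs_sub_le_iff]
  constructor
  · linarith [le_add_norm_sub_of_isLeast hB hA hb ha]
  · linarith [le_add_norm_sub_of_isLeast hA hB ha hb, norm_sub_rev A B]

end Matrix.IsHermitian

theorem ContinuousOn.of_isLeast_eigenvalues {α ι : Type*} [TopologicalSpace α] [Fintype ι]
    [DecidableEq ι] {A : α → Matrix ι ι ℂ} {s : Set α} {μ : α → ℝ} (hA : ContinuousOn A s)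
    (hherm : ∀ t ∈ s, (A t).IsHermitian)
    (hμ : ∀ t (ht : t ∈ s), IsLeast (range (hherm t ht).eigenvalues) (μ t)) :
    ContinuousOn μ s := fun a ha ↦ by
  have hdist : ∀ᶠ t in 𝓝[s] a, dist (μ t) (μ a) ≤ dist (A t) (A a) :=
    eventually_nhdsWithin_of_forall fun t ht ↦
      (hherm t ht).dist_le_dist_of_isLeast (hherm a ha) (hμ t ht) (hμ a ha)
  exact tendsto_iff_dist_tendsto_zero.2 <| squeeze_zero' (Eventually.of_forall fun _ ↦ dist_nonneg)
    hdist (tendsto_iff_dist_tendsto_zero.1 (hA a ha))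

theorem krein_type_estimate_norm_general (n : ℕ)
    (H C : ℝ → Matrix (Fin n) (Fin n) ℂ)
    (hHcont : ContinuousOn H (Set.Ici (0:ℝ))) (hCcont : ContinuousOn C (Set.Ici (0:ℝ)))
    (hHpos : ∀ t ≥ (0:ℝ), (H t).PosDef)
    (hCherm : ∀ t ≥ (0:ℝ), (C t).IsHermitian)
    (cmin hmin : ℝ → ℝ)
    (hcmin : ∀ t (ht : t ≥ (0:ℝ)),
      IsLeast (Set.range (hCherm t ht).eigenvalues) (cmin t))
    (hcminpos : ∀ t ≥ (0:ℝ), 0 < cmin t)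
    (hhmin : ∀ t (ht : t ≥ (0:ℝ)),
      IsLeast (Set.range (hHpos t ht).1.eigenvalues) (hmin t))
    (hhminpos : ∀ t ≥ (0:ℝ), 0 < hmin t)
    (y : ℝ → Fin n → ℂ)
    (hident : ∀ t ≥ (0:ℝ),
      HasDerivAt (fun s => (star (y s) ⬝ᵥ (H s).mulVec (y s)).re)
        (-(star (y t) ⬝ᵥ (C t).mulVec (y t)).re) t) :
    ∀ t ≥ (0:ℝ),
      (star (y t) ⬝ᵥ y t).re
        ≤ (‖H 0‖ / hmin t) * (star (y 0) ⬝ᵥ y 0).re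
            * Real.exp (-∫ s in (0:ℝ)..t, cmin s / ‖H s‖) := by
  intro t ht
  have hnorm : ∀ s ∈ Ici (0 : ℝ), 0 < ‖H s‖ := fun s hs ↦ by
    obtain ⟨i, hi⟩ := (hhmin s hs).1
    exact (hhminpos s hs).trans_le (hi ▸ (hHpos s hs).1.eigenvalues_le_norm i)
  have hk : ContinuousOn (fun s ↦ cmin s / ‖H s‖) (Ici 0) :=
    (hCcont.of_isLeast_eigenvalues hCherm hcmin).div hHcont.norm fun s hs ↦ (hnorm s hs).ne'
  have hdecay := le_mul_exp_neg_integral_of_hasDerivAt_le ht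
    (fun s hs ↦ (hident s hs.1).continuousAt.continuousWithinAt) (hk.mono Icc_subset_Ici_self)
    (fun s hs ↦ hident s hs.1.le) fun s hs ↦ neg_le_neg <|
      (hHpos s hs.1.le).1.div_norm_mul_re_le_re_star_dotProduct_mulVec (hCherm s hs.1.le)
        (hcminpos s hs.1.le).le (fun i ↦ (hcmin s hs.1.le).2 ⟨i, rfl⟩) (y s)
  have hlow := (hHpos t ht).1.mul_re_le_re_star_dotProduct_mulVec
    (fun i ↦ (hhmin t ht).2 ⟨i, rfl⟩) (y t)
  have hup := (hHpos 0 le_rfl).1.re_star_dotProduct_mulVec_le_norm_mul (y 0)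
  rw [div_mul_eq_mul_div, div_mul_eq_mul_div, le_div_iff₀ (hhminpos t ht), mul_comm]
  calc hmin t * (star (y t) ⬝ᵥ y t).re ≤ (star (y t) ⬝ᵥ H t *ᵥ y t).re := hlow
    _ ≤ (star (y 0) ⬝ᵥ H 0 *ᵥ y 0).re * Real.exp (-∫ s in (0:ℝ)..t, cmin s / ‖H s‖) := hdecay
    _ ≤ _ := by gcongr

theorem krein_type_estimate_norm (n : ℕ)
    (H C : ℝ → Matrix (Fin n) (Fin n) ℂ)
    (hHcont : ContinuousOn H (Set.Ici (0:ℝ))) (hCcont : ContinuousOn C (Set.Ici (0:ℝ)))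
    (hHpos : ∀ t ≥ (0:ℝ), (H t).PosDef)
    (hCherm : ∀ t ≥ (0:ℝ), (C t).IsHermitian)
    (cmin hmin : ℝ → ℝ)
    (hcmin : ∀ t (ht : t ≥ (0:ℝ)),
      IsLeast (Set.range (hCherm t ht).eigenvalues) (cmin t))
    (hcminpos : ∀ t ≥ (0:ℝ), 0 < cmin t)
    (hhmin : ∀ t (ht : t ≥ (0:ℝ)),
      IsLeast (Set.range (hHpos t ht).1.eigenvalues) (hmin t))
    (hhminpos : ∀ t ≥ (0:ℝ), 0 < hmin t)
    (y : ℝ → Fin n → ℂ)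
    (hydiff : Differentiable ℝ y)
    (hident : ∀ t ≥ (0:ℝ),
      HasDerivAt (fun s => (star (y s) ⬝ᵥ (H s).mulVec (y s)).re)
        (-(star (y t) ⬝ᵥ (C t).mulVec (y t)).re) t) :
    ∀ t ≥ (0:ℝ),
      (star (y t) ⬝ᵥ y t).re
        ≤ (‖H 0‖ / hmin t) * (star (y 0) ⬝ᵥ y 0).re
            * Real.exp (-∫ s in (0:ℝ)..t, cmin s / ‖H s‖) :=
  krein_type_estimate_norm_general n H C hHcont hCcont hHpos hCherm cmin hmin hcmin hcminpos hhmin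
    hhminpos y hident
end

section
/- Let H : [0,∞) → Matrix (Fin 2) (Fin 2) ℝ be continuous, symmetric positive definite with ‖H(t)‖ ≤ h_max, and let v : [0,∞) → ℝ² be differentiable with v' = (A(t) + ΔA(t))v, where H'(t) + H(t)A(t) + A(t)ᵀH(t) = -I. If ‖ΔA(t)‖ < 1/(2h_max) for all t, then d/dt ⟨H(t)v(t), v(t)⟩ ≤ -(1 - 2‖H(t)‖‖ΔA(t)‖)‖v(t)‖² and consequently ⟨H(t)v(t),v(t)⟩ ≤ ⟨H(0)v(0),v(0)⟩ exp(-∫₀ᵗ (1/‖H(s)‖ - 2‖ΔA(s)‖) ds). -/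
open Matrix intervalIntegral
open scoped Matrix.Norms.L2Operator

/-!
Along a solution, `d/dt ⟨H v, v⟩ = ⟨(H' + H (A + ΔA) + (A + ΔA)ᵀ H) v, v⟩`, which the Lyapunov
equation turns into `-|v|² + ⟨(H ΔA + ΔAᵀ H) v, v⟩`; the perturbation term is at most
`2 ‖H‖ ‖ΔA‖ |v|²`. As `⟨H v, v⟩ ≤ ‖H‖ |v|²` and the smallness of `ΔA` makes
`g = 1 / ‖H‖ - 2 ‖ΔA‖` nonnegative, `f = ⟨H v, v⟩` satisfies `f' ≤ -g f`, and Grönwall's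
inequality (`f · exp (∫ g)` is antitone) gives the exponential bound.
-/

section Calculus

variable {m n : Type*} [Fintype n] {t : ℝ}

theorem HasDerivAt.dotProduct {u v : ℝ → n → ℝ} {u' v' : n → ℝ}
    (hu : HasDerivAt u u' t) (hv : HasDerivAt v v' t) :
    HasDerivAt (fun s => u s ⬝ᵥ v s) (u' ⬝ᵥ v t + u t ⬝ᵥ v') t := by
  have := HasDerivAt.fun_sum (u := Finset.univ) fun i _ =>
    (hasDerivAt_pi.1 hu i).fun_mul (hasDerivAt_pi.1 hv i)
  rw [Finset.sum_add_distrib] at this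
  exact this

theorem HasDerivAt.mulVec {H : ℝ → Matrix m n ℝ} {v : ℝ → n → ℝ} {H' : Matrix m n ℝ}
    {v' : n → ℝ} (hH : HasDerivAt H H' t) (hv : HasDerivAt v v' t) :
    HasDerivAt (fun s => H s *ᵥ v s) (H' *ᵥ v t + H t *ᵥ v') t :=
  hasDerivAt_pi.2 fun i => (hasDerivAt_pi.1 hH i).dotProduct hv

theorem HasDerivAt.mulVec_dotProduct_self {H : ℝ → Matrix n n ℝ} {v : ℝ → n → ℝ}
    {H' M : Matrix n n ℝ} (hH : HasDerivAt H H' t) (hv : HasDerivAt v (M *ᵥ v t) t) :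
    HasDerivAt (fun s => H s *ᵥ v s ⬝ᵥ v s) (v t ⬝ᵥ (H' + H t * M + Mᵀ * H t) *ᵥ v t) t := by
  convert (hH.mulVec hv).dotProduct hv using 1
  rw [add_mulVec, add_mulVec, dotProduct_add, dotProduct_add, add_dotProduct, ← mulVec_mulVec,
    ← mulVec_mulVec, dotProduct_comm _ (v t), dotProduct_comm _ (v t), dotProduct_mulVec (v t) Mᵀ,
    vecMul_transpose, dotProduct_comm (M *ᵥ v t)]

theorem le_mul_exp_neg_integral_of_hasDerivAt_le_s10 {f f' g : ℝ → ℝ} {a b : ℝ} (hab : a ≤ b)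
    (hf : ContinuousOn f (Set.Icc a b)) (hf' : ∀ x ∈ Set.Ioo a b, HasDerivAt f (f' x) x)
    (hg : ContinuousOn g (Set.Icc a b)) (hle : ∀ x ∈ Set.Ioo a b, f' x ≤ -(g x * f x)) :
    f b ≤ f a * Real.exp (-∫ x in a..b, g x) := by
  set G : ℝ → ℝ := fun x => ∫ y in a..x, g y
  have hG : ContinuousOn G (Set.Icc a b) := by
    have := continuousOn_primitive_interval (a := a) (b := b) (μ := MeasureTheory.volume)
      (by rw [Set.uIcc_of_le hab]; exact hg.integrableOn_Icc)
    rwa [Set.uIcc_of_le hab] at this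
  have hG' : ∀ x ∈ Set.Ioo a b, HasDerivAt G (g x) x := fun x hx =>
    integral_hasDerivAt_right
      ((hg.mono (Set.Icc_subset_Icc_right hx.2.le)).intervalIntegrable_of_Icc hx.1.le)
      ((hg.mono Set.Ioo_subset_Icc_self).stronglyMeasurableAtFilter isOpen_Ioo x hx)
      (hg.continuousAt (Icc_mem_nhds hx.1 hx.2))
  have hanti : AntitoneOn (fun x => f x * Real.exp (G x)) (Set.Icc a b) := by
    refine antitoneOn_of_hasDerivWithinAt_nonpos (convex_Icc a b) (hf.mul hG.rexp)
      (f' := fun x => f' x * Real.exp (G x) + f x * (Real.exp (G x) * g x))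
      (fun x hx => ?_) (fun x hx => ?_)
    all_goals rw [interior_Icc] at hx
    · exact ((hf' x hx).mul (hG' x hx).exp).hasDerivWithinAt
    · have := mul_le_mul_of_nonneg_left (hle x hx) (Real.exp_pos (G x)).le
      linarith
  have hmono : f b * Real.exp (G b) ≤ f a := by
    simpa [G] using hanti (Set.left_mem_Icc.2 hab) (Set.right_mem_Icc.2 hab) hab
  calc f b = f b * Real.exp (G b) * Real.exp (-G b) := by
        rw [mul_assoc, ← Real.exp_add, add_neg_cancel, Real.exp_zero, mul_one]
    _ ≤ f a * Real.exp (-G b) := by gcongr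

end Calculus

section Lyapunov

variable {n : Type*} [Fintype n] [DecidableEq n]

theorem Matrix.l2_opNorm_transpose (A : Matrix n n ℝ) : ‖Aᵀ‖ = ‖A‖ := by
  rw [← conjTranspose_eq_transpose_of_trivial, l2_opNorm_conjTranspose]

theorem Matrix.dotProduct_mulVec_self_le (A : Matrix n n ℝ) (x : n → ℝ) :
    x ⬝ᵥ A *ᵥ x ≤ ‖A‖ * (x ⬝ᵥ x) := by
  have hx : x ⬝ᵥ x = ‖WithLp.toLp 2 x‖ ^ 2 := by
    rw [← real_inner_self_eq_norm_sq, EuclideanSpace.inner_toLp_toLp]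
    simp
  calc x ⬝ᵥ A *ᵥ x = inner ℝ (WithLp.toLp 2 x) (toEuclideanCLM (𝕜 := ℝ) A (WithLp.toLp 2 x)) :=
        (inner_toEuclideanCLM A _ _).symm
    _ ≤ ‖WithLp.toLp 2 x‖ * ‖toEuclideanCLM (𝕜 := ℝ) A (WithLp.toLp 2 x)‖ := real_inner_le_norm _ _
    _ ≤ ‖WithLp.toLp 2 x‖ * (‖A‖ * ‖WithLp.toLp 2 x‖) := by
        gcongr
        exact (toEuclideanCLM (𝕜 := ℝ) A).le_opNorm _
    _ = ‖A‖ * (x ⬝ᵥ x) := by rw [hx]; ring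

theorem dotProduct_perturbed_lyapunov_mulVec_le {H H' A ΔA : Matrix n n ℝ}
    (hlyap : H' + H * A + Aᵀ * H = -1) (x : n → ℝ) :
    x ⬝ᵥ (H' + H * (A + ΔA) + (A + ΔA)ᵀ * H) *ᵥ x ≤ -(1 - 2 * ‖H‖ * ‖ΔA‖) * (x ⬝ᵥ x) := by
  have hsplit : H' + H * (A + ΔA) + (A + ΔA)ᵀ * H = -1 + (H * ΔA + ΔAᵀ * H) := by
    rw [transpose_add, mul_add, add_mul, ← hlyap]
    abel
  have hnorm : ‖H * ΔA + ΔAᵀ * H‖ ≤ 2 * ‖H‖ * ‖ΔA‖ :=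
    calc ‖H * ΔA + ΔAᵀ * H‖ ≤ ‖H‖ * ‖ΔA‖ + ‖ΔAᵀ‖ * ‖H‖ :=
          norm_add_le_of_le (norm_mul_le _ _) (norm_mul_le _ _)
      _ = 2 * ‖H‖ * ‖ΔA‖ := by rw [l2_opNorm_transpose]; ring
  have hx : 0 ≤ x ⬝ᵥ x := Finset.sum_nonneg fun i _ => mul_self_nonneg (x i)
  rw [hsplit, add_mulVec, dotProduct_add, neg_mulVec, one_mulVec, dotProduct_neg]
  nlinarith [dotProduct_mulVec_self_le (H * ΔA + ΔAᵀ * H) x]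

theorem Matrix.le_neg_mul_mulVec_dotProduct_self_of_le {H : Matrix n n ℝ} {a d : ℝ}
    (hH : 0 < ‖H‖) (ha : 2 * ‖H‖ * a ≤ 1) (x : n → ℝ)
    (hd : d ≤ -(1 - 2 * ‖H‖ * a) * (x ⬝ᵥ x)) :
    d ≤ -((1 / ‖H‖ - 2 * a) * (H *ᵥ x ⬝ᵥ x)) := by
  have hrate : 0 ≤ 1 / ‖H‖ - 2 * a := by
    rw [sub_nonneg, le_div_iff₀ hH]
    linarith
  have hquad : H *ᵥ x ⬝ᵥ x ≤ ‖H‖ * (x ⬝ᵥ x) := by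
    rw [dotProduct_comm]
    exact dotProduct_mulVec_self_le H x
  have heq : (1 / ‖H‖ - 2 * a) * (‖H‖ * (x ⬝ᵥ x)) = (1 - 2 * ‖H‖ * a) * (x ⬝ᵥ x) := by
    field_simp
  nlinarith [mul_le_mul_of_nonneg_left hquad hrate]

end Lyapunov

theorem perturbed_lyapunov_estimate_general
    (A ΔA H H' : ℝ → Matrix (Fin 2) (Fin 2) ℝ)
    (hΔAcont : ContinuousOn ΔA (Set.Ici 0))
    (hHcont : ContinuousOn H (Set.Ici 0))
    (hHderiv : ∀ t ≥ (0:ℝ), HasDerivAt H (H' t) t)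
    (hlyap : ∀ t ≥ (0:ℝ), H' t + H t * A t + (A t)ᵀ * H t = -(1 : Matrix (Fin 2) (Fin 2) ℝ))
    (hHpos : ∀ t ≥ (0:ℝ), (H t).PosDef)
    (hmax : ℝ) (hHbound : ∀ t ≥ (0:ℝ), ‖H t‖ ≤ hmax)
    (hΔAsmall : ∀ t ≥ (0:ℝ), ‖ΔA t‖ < 1 / (2 * hmax))
    (v v' : ℝ → Fin 2 → ℝ)
    (hvderiv : ∀ t ≥ (0:ℝ), HasDerivAt v (v' t) t)
    (hvsol : ∀ t ≥ (0:ℝ), v' t = (A t + ΔA t).mulVec (v t)) :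
    (∀ t ≥ (0:ℝ), ∃ d : ℝ,
        HasDerivAt (fun s => (H s).mulVec (v s) ⬝ᵥ v s) d t ∧
        d ≤ -(1 - 2 * ‖H t‖ * ‖ΔA t‖) * (v t ⬝ᵥ v t)) ∧
    (∀ t ≥ (0:ℝ),
        (H t).mulVec (v t) ⬝ᵥ v t
          ≤ ((H 0).mulVec (v 0) ⬝ᵥ v 0)
              * Real.exp (-∫ s in (0:ℝ)..t, (1 / ‖H s‖ - 2 * ‖ΔA s‖))) := by
  have hderiv t (ht : 0 ≤ t) :=
    (hHderiv t ht).mulVec_dotProduct_self (hvsol t ht ▸ hvderiv t ht)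
  have hbound t (ht : 0 ≤ t) :=
    dotProduct_perturbed_lyapunov_mulVec_le (ΔA := ΔA t) (hlyap t ht) (v t)
  refine ⟨fun t ht => ⟨_, hderiv t ht, hbound t ht⟩, fun t ht => ?_⟩
  have hHnorm s (hs : 0 ≤ s) : 0 < ‖H s‖ := norm_pos_iff.2 (hHpos s hs).isUnit.ne_zero
  have hsmall s (hs : 0 ≤ s) : 2 * ‖H s‖ * ‖ΔA s‖ ≤ 1 := by
    have hmax_pos : 0 < hmax := (hHnorm s hs).trans_le (hHbound s hs)
    have := (lt_div_iff₀ (by positivity)).1 (hΔAsmall s hs)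
    nlinarith [hHbound s hs, norm_nonneg (ΔA s)]
  have hg : ContinuousOn (fun s => 1 / ‖H s‖ - 2 * ‖ΔA s‖) (Set.Icc 0 t) :=
    (continuousOn_const.div (hHcont.mono Set.Icc_subset_Ici_self).norm
      fun s hs => (hHnorm s hs.1).ne').sub
      (continuousOn_const.mul (hΔAcont.mono Set.Icc_subset_Ici_self).norm)
  exact le_mul_exp_neg_integral_of_hasDerivAt_le_s10 ht
    (fun s hs => (hderiv s hs.1).continuousAt.continuousWithinAt) (fun s hs => hderiv s hs.1.le)
    hg fun s hs => le_neg_mul_mulVec_dotProduct_self_of_le (hHnorm s hs.1.le)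
      (hsmall s hs.1.le) (v s) (hbound s hs.1.le)

theorem perturbed_lyapunov_estimate
    (A ΔA H H' : ℝ → Matrix (Fin 2) (Fin 2) ℝ)
    (hAcont : ContinuousOn A (Set.Ici 0)) (hΔAcont : ContinuousOn ΔA (Set.Ici 0))
    (hHcont : ContinuousOn H (Set.Ici 0))
    (hHderiv : ∀ t ≥ (0:ℝ), HasDerivAt H (H' t) t)
    (hlyap : ∀ t ≥ (0:ℝ), H' t + H t * A t + (A t)ᵀ * H t = -(1 : Matrix (Fin 2) (Fin 2) ℝ))
    (hHsymm : ∀ t ≥ (0:ℝ), (H t)ᵀ = H t)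
    (hHpos : ∀ t ≥ (0:ℝ), (H t).PosDef)
    (hmax : ℝ) (hHbound : ∀ t ≥ (0:ℝ), ‖H t‖ ≤ hmax)
    (hΔAsmall : ∀ t ≥ (0:ℝ), ‖ΔA t‖ < 1 / (2 * hmax))
    (v v' : ℝ → Fin 2 → ℝ)
    (hvderiv : ∀ t ≥ (0:ℝ), HasDerivAt v (v' t) t)
    (hvsol : ∀ t ≥ (0:ℝ), v' t = (A t + ΔA t).mulVec (v t)) :
    (∀ t ≥ (0:ℝ), ∃ d : ℝ,
        HasDerivAt (fun s => (H s).mulVec (v s) ⬝ᵥ v s) d t ∧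
        d ≤ -(1 - 2 * ‖H t‖ * ‖ΔA t‖) * (v t ⬝ᵥ v t)) ∧
    (∀ t ≥ (0:ℝ),
        (H t).mulVec (v t) ⬝ᵥ v t
          ≤ ((H 0).mulVec (v 0) ⬝ᵥ v 0)
              * Real.exp (-∫ s in (0:ℝ)..t, (1 / ‖H s‖ - 2 * ‖ΔA s‖))) :=
  perturbed_lyapunov_estimate_general A ΔA H H' hΔAcont hHcont hHderiv hlyap hHpos hmax hHbound
    hΔAsmall v v' hvderiv hvsol
end

section
/- Let ψ : [0,∞) → (0,∞) be differentiable and suppose ψ'(t) ≤ -a(t) ψ(t) + q ψ(t)^{3/2}, where a(t) ≥ a₀ > 0 and q > 0. If ψ(0)^{1/2} < a₀/q · (1/2), then ψ(t) ≤ 4 ψ(0) exp(-∫₀ᵗ a(s)/2 ds) for all t ≥ 0 — more precisely, the differential inequality for ψ^{-1/2} gives exp(-∫₀ᵗ a(τ)/2 dτ) ψ(t)^{-1/2} ≥ ψ(0)^{-1/2} - (q/2)∫₀ᵗ exp(-∫₀^τ a(ξ)/2 dξ) dτ. -/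
/-!
Put `w = ψ^{-1/2}`. Dividing the hypothesis by `-2 ψ^{3/2}` turns it into the linear inequality
`w' ≥ (a/2) w - q/2`, and with the integrating factor `E t = exp (-∫₀ᵗ a/2)` the function
`E w + (q/2) ∫₀ᵗ E` is nondecreasing. As `a` is only integrable, `E` is merely absolutely
continuous, so this monotonicity comes from the fundamental theorem of calculus for absolutely
continuous functions rather than from a pointwise derivative. Since `E t ≤ exp (-a₀ t/2)`,
`∫₀ᵗ E ≤ 2/a₀`, and the smallness of `ψ 0` keeps `E w ≥ w(0)/2`, which squares to the bound on `ψ`.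
-/

open intervalIntegral MeasureTheory Set

section AbsolutelyContinuous

variable {a b : ℝ}

theorem AbsolutelyContinuousOnInterval.congr {X : Type*} [PseudoMetricSpace X] {f g : ℝ → X}
    (hf : AbsolutelyContinuousOnInterval f a b) (hfg : EqOn f g (uIcc a b)) :
    AbsolutelyContinuousOnInterval g a b := by
  unfold AbsolutelyContinuousOnInterval at *
  refine hf.congr' ?_
  filter_upwards [Filter.mem_inf_of_right (Filter.mem_principal_self _)] with E hE
  exact Finset.sum_congr rfl fun i hi => by rw [hfg (hE.1 i hi).1, hfg (hE.1 i hi).2]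

theorem LipschitzOnWith.comp_absolutelyContinuousOnInterval {X Y : Type*} [PseudoMetricSpace X]
    [PseudoMetricSpace Y] {g : X → Y} {K : NNReal} {s : Set X} {f : ℝ → X}
    (hg : LipschitzOnWith K g s) (hf : AbsolutelyContinuousOnInterval f a b)
    (hfs : MapsTo f (uIcc a b) s) : AbsolutelyContinuousOnInterval (g ∘ f) a b := by
  unfold AbsolutelyContinuousOnInterval at *
  refine squeeze_zero' (.of_forall fun _ => Finset.sum_nonneg fun _ _ => dist_nonneg) ?_
    (by simpa using hf.const_mul (K : ℝ))
  filter_upwards [Filter.mem_inf_of_right (Filter.mem_principal_self _)] with E hE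
  rw [Finset.mul_sum]
  exact Finset.sum_le_sum fun i hi => hg.dist_le_mul _ (hfs (hE.1 i hi).1) _ (hfs (hE.1 i hi).2)

theorem ContDiff.comp_absolutelyContinuousOnInterval {g f : ℝ → ℝ} (hg : ContDiff ℝ 1 g)
    (hf : AbsolutelyContinuousOnInterval f a b) :
    AbsolutelyContinuousOnInterval (g ∘ f) a b := by
  obtain ⟨M, hM⟩ := isCompact_uIcc.exists_bound_of_continuousOn hf.continuousOn
  obtain ⟨K, hK⟩ :=
    hg.contDiffOn.exists_lipschitzOnWith one_ne_zero (convex_Icc (-M) M) isCompact_Icc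
  exact hK.comp_absolutelyContinuousOnInterval hf fun x hx => abs_le.1 (hM x hx)

theorem absolutelyContinuousOnInterval_of_hasDerivAt {f f' : ℝ → ℝ}
    (hf : ∀ x ∈ uIcc a b, HasDerivAt f (f' x) x) (hf' : IntervalIntegrable f' volume a b) :
    AbsolutelyContinuousOnInterval f a b := by
  refine ((contDiffOn_const (c := f a)).absolutelyContinuousOnInterval.fun_add
    (hf'.absolutelyContinuousOnInterval_intervalIntegral left_mem_uIcc)).congr fun x hx => ?_
  have hsub : uIcc a x ⊆ uIcc a b := uIcc_subset_uIcc left_mem_uIcc hx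
  simp only [integral_eq_sub_of_hasDerivAt (fun y hy => hf y (hsub hy)) (hf'.mono_set hsub),
    add_sub_cancel]

end AbsolutelyContinuous

theorem intervalIntegrable_deriv_of_le {f f' : ℝ → ℝ} {a b c : ℝ}
    (hf : ∀ x ∈ uIcc a b, HasDerivAt f (f' x) x) (hc : ∀ x ∈ uIcc a b, c ≤ f' x) :
    IntervalIntegrable f' volume a b := by
  have hg : ∀ x ∈ uIcc a b, HasDerivAt (fun y => f y - c * y) (f' x - c) x := fun x hx =>
    ((hf x hx).sub ((hasDerivAt_id x).const_mul c)).congr_deriv (by simp)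
  have hg' := intervalIntegrable_deriv_of_nonneg
    (fun x hx => (hg x hx).continuousAt.continuousWithinAt)
    (fun x hx => hg x (Ioo_subset_Icc_self hx))
    fun x hx => sub_nonneg.2 (hc x (Ioo_subset_Icc_self hx))
  simpa using hg'.add (intervalIntegrable_const (c := c))

theorem HasDerivAt.inv_sqrt {f : ℝ → ℝ} {f' x : ℝ} (hf : HasDerivAt f f' x) (hx : 0 < f x) :
    HasDerivAt (fun y => (√(f y))⁻¹) (-f' / (2 * f x * √(f x))) x := by
  have hs : 0 < √(f x) := Real.sqrt_pos.2 hx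
  refine ((hf.sqrt hx.ne').inv hs.ne').congr_deriv ?_
  rw [Real.sq_sqrt hx.le]
  field_simp

noncomputable def integratingFactor (b : ℝ → ℝ) (t₀ t : ℝ) : ℝ := Real.exp (-∫ s in t₀..t, b s)

section IntegratingFactor

variable {b : ℝ → ℝ} {t₀ T : ℝ}

theorem absolutelyContinuousOnInterval_integratingFactor (hb : IntervalIntegrable b volume t₀ T) :
    AbsolutelyContinuousOnInterval (integratingFactor b t₀) t₀ T :=
  Real.contDiff_exp.comp_absolutelyContinuousOnInterval
    (hb.absolutelyContinuousOnInterval_intervalIntegral left_mem_uIcc).fun_neg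

theorem integratingFactor_le_exp {β : ℝ} (hT : t₀ ≤ T) (hb : IntervalIntegrable b volume t₀ T)
    (hβ : ∀ x ∈ Icc t₀ T, β ≤ b x) : integratingFactor b t₀ T ≤ Real.exp (-(β * (T - t₀))) := by
  have := integral_mono_on hT intervalIntegrable_const hb hβ
  rw [intervalIntegral.integral_const, smul_eq_mul] at this
  unfold integratingFactor
  exact Real.exp_le_exp.2 (by linarith)

theorem integral_integratingFactor_le {β : ℝ} (hβ₀ : 0 < β) (hT : t₀ ≤ T)
    (hb : IntervalIntegrable b volume t₀ T) (hβ : ∀ x ∈ Icc t₀ T, β ≤ b x) :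
    ∫ x in t₀..T, integratingFactor b t₀ x ≤ 1 / β := by
  have hexp : ∀ x, HasDerivAt (fun y => -Real.exp (-(β * (y - t₀))) / β)
      (Real.exp (-(β * (x - t₀)))) x := fun x => by
    have := ((((hasDerivAt_id x).sub_const t₀).const_mul β).neg.exp.neg.div_const β)
    exact this.congr_deriv (by field_simp; simp)
  calc ∫ x in t₀..T, integratingFactor b t₀ x
      ≤ ∫ x in t₀..T, Real.exp (-(β * (x - t₀))) := by
        refine integral_mono_on hT
          (absolutelyContinuousOnInterval_integratingFactor hb).continuousOn.intervalIntegrable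
          ((by fun_prop : Continuous _).intervalIntegrable _ _) fun x hx =>
            integratingFactor_le_exp hx.1 (hb.mono_set ?_) fun y hy => hβ y ⟨hy.1, hy.2.trans hx.2⟩
        rw [uIcc_of_le hT, uIcc_of_le hx.1]
        exact Icc_subset_Icc_right hx.2
    _ = (1 - Real.exp (-(β * (T - t₀)))) / β := by
        rw [integral_eq_sub_of_hasDerivAt (fun x _ => hexp x)
          ((by fun_prop : Continuous _).intervalIntegrable _ _)]
        simp only [sub_self, mul_zero, neg_zero, Real.exp_zero]
        ring
    _ ≤ 1 / β := by gcongr; linarith [Real.exp_pos (-(β * (T - t₀)))]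

theorem sub_mul_integral_integratingFactor_le {w w' : ℝ → ℝ} {c : ℝ} (hT : t₀ ≤ T)
    (hw : ∀ x ∈ Icc t₀ T, HasDerivAt w (w' x) x) (hw' : IntervalIntegrable w' volume t₀ T)
    (hb : IntervalIntegrable b volume t₀ T) (hineq : ∀ x ∈ Icc t₀ T, b x * w x - c ≤ w' x) :
    w t₀ - c * ∫ x in t₀..T, integratingFactor b t₀ x ≤ integratingFactor b t₀ T * w T := by
  set E := integratingFactor b t₀
  have hE := absolutelyContinuousOnInterval_integratingFactor hb
  have hEint : IntervalIntegrable E volume t₀ T := hE.continuousOn.intervalIntegrable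
  set G := fun x => E x * w x + c * ∫ s in t₀..x, E s
  have hG : AbsolutelyContinuousOnInterval G t₀ T :=
    (hE.fun_mul (absolutelyContinuousOnInterval_of_hasDerivAt (by rwa [uIcc_of_le hT]) hw')).fun_add
      ((hEint.absolutelyContinuousOnInterval_intervalIntegral left_mem_uIcc).const_mul c)
  -- By Lebesgue differentiation, `G' = E (w' - (b w - c)) ≥ 0` almost everywhere on `[t₀, T]`.
  have hG' : ∀ᵐ x, x ∈ Icc t₀ T → 0 ≤ deriv G x := by
    filter_upwards [hb.ae_hasDerivAt_integral, hEint.ae_hasDerivAt_integral] with x hA hB hx'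
    have hx : x ∈ uIcc t₀ T := by rwa [uIcc_of_le hT]
    have hGx : HasDerivAt G (E x * (w' x - (b x * w x - c))) x :=
      (((hA hx t₀ left_mem_uIcc).fun_neg.exp.mul (hw x hx')).add
        ((hB hx t₀ left_mem_uIcc).const_mul c)).congr_deriv
          (by simp only [E, integratingFactor]; ring)
    rw [hGx.deriv]
    exact mul_nonneg (Real.exp_pos _).le (sub_nonneg.2 (hineq x hx'))
  have hmono := integral_nonneg_of_ae_restrict hT ((ae_restrict_iff' measurableSet_Icc).2 hG')
  rw [hG.integral_deriv_eq_sub] at hmono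
  simpa [G, E, integratingFactor] using hmono

end IntegratingFactor

theorem half_mul_inv_sqrt_sub_le_of_le {p p' a q : ℝ} (hp : 0 < p)
    (h : p' ≤ -a * p + q * (p * √p)) : a / 2 * (√p)⁻¹ - q / 2 ≤ -p' / (2 * p * √p) := by
  have hs : 0 < √p := Real.sqrt_pos.2 hp
  rw [le_div_iff₀ (by positivity), sub_mul,
    show a / 2 * (√p)⁻¹ * (2 * p * √p) = a * p by field_simp]
  linarith

theorem le_four_mul_of_inv_sqrt_le {p₀ p E : ℝ} (hp₀ : 0 < p₀) (hp : 0 < p) (hE₀ : 0 ≤ E)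
    (hE : E ≤ 1) (h : (√p₀)⁻¹ / 2 ≤ E * (√p)⁻¹) : p ≤ 4 * p₀ * E := by
  have hs₀ : 0 < √p₀ := Real.sqrt_pos.2 hp₀
  have hs : 0 < √p := Real.sqrt_pos.2 hp
  have hroot : √p ≤ 2 * √p₀ * E := by
    field_simp at h
    linarith
  calc p = √p ^ 2 := (Real.sq_sqrt hp.le).symm
    _ ≤ (2 * √p₀ * E) ^ 2 := by gcongr
    _ = 4 * p₀ * E * E := by rw [mul_pow, mul_pow, Real.sq_sqrt hp₀.le]; ring
    _ ≤ 4 * p₀ * E := mul_le_of_le_one_right (by positivity) hE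

theorem nonlinear_comparison (ψ ψ' a : ℝ → ℝ) (a₀ q : ℝ)
    (hψpos : ∀ t ≥ (0:ℝ), 0 < ψ t)
    (hψderiv : ∀ t ≥ (0:ℝ), HasDerivAt ψ (ψ' t) t)
    (hineq : ∀ t ≥ (0:ℝ), ψ' t ≤ -a t * ψ t + q * (ψ t * Real.sqrt (ψ t)))
    (ha : ∀ t ≥ (0:ℝ), a t ≥ a₀) (ha₀ : 0 < a₀) (hq : 0 < q)
    (haint : ∀ t ≥ (0:ℝ), IntervalIntegrable a MeasureTheory.volume 0 t)
    (hsmall : Real.sqrt (ψ 0) < a₀ / q * (1 / 2)) :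
    ∀ t ≥ (0:ℝ),
      ψ t ≤ 4 * ψ 0 * Real.exp (-∫ s in (0:ℝ)..t, a s / 2) ∧
      Real.exp (-∫ τ in (0:ℝ)..t, a τ / 2) * (Real.sqrt (ψ t))⁻¹
        ≥ (Real.sqrt (ψ 0))⁻¹
            - (q / 2) * ∫ τ in (0:ℝ)..t, Real.exp (-∫ ξ in (0:ℝ)..τ, a ξ / 2) := by
  intro t ht
  have hb := (haint t ht).div_const 2
  have hab : ∀ x ∈ Icc 0 t, a₀ / 2 ≤ a x / 2 := fun x hx => by linarith [ha x hx.1]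
  have hw : ∀ x ∈ Icc 0 t, HasDerivAt (fun y => (√(ψ y))⁻¹) (-ψ' x / (2 * ψ x * √(ψ x))) x :=
    fun x hx => (hψderiv x hx.1).inv_sqrt (hψpos x hx.1)
  have hw_ge : ∀ x ∈ Icc 0 t, a x / 2 * (√(ψ x))⁻¹ - q / 2 ≤ -ψ' x / (2 * ψ x * √(ψ x)) :=
    fun x hx => half_mul_inv_sqrt_sub_le_of_le (hψpos x hx.1) (hineq x hx.1)
  have hw' := intervalIntegrable_deriv_of_le (c := -(q / 2)) (by rwa [uIcc_of_le ht]) fun x hx => by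
    rw [uIcc_of_le ht] at hx
    have : 0 ≤ a x / 2 * (√(ψ x))⁻¹ := mul_nonneg (by linarith [hab x hx]) (by positivity)
    linarith [hw_ge x hx]
  have hlin := sub_mul_integral_integratingFactor_le ht hw hw' hb hw_ge
  refine ⟨?_, hlin⟩
  have hB := integral_integratingFactor_le (half_pos ha₀) ht hb hab
  have hE : integratingFactor (fun s => a s / 2) 0 t ≤ 1 :=
    (integratingFactor_le_exp (β := 0) ht hb fun x hx => by linarith [hab x hx]).trans (by simp)
  have hqa : q / a₀ < (√(ψ 0))⁻¹ / 2 := by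
    have := (inv_lt_inv₀ (by positivity) (Real.sqrt_pos.2 (hψpos 0 le_rfl))).2 hsmall
    rw [show (a₀ / q * (1 / 2))⁻¹ = 2 * (q / a₀) by field_simp] at this
    linarith
  have hqB : q / 2 * ∫ x in (0:ℝ)..t, integratingFactor (fun s => a s / 2) 0 x ≤ q / a₀ :=
    calc _ ≤ q / 2 * (1 / (a₀ / 2)) := by gcongr
      _ = q / a₀ := by field_simp
  exact le_four_mul_of_inv_sqrt_le (E := integratingFactor (fun s => a s / 2) 0 t)
    (hψpos 0 le_rfl) (hψpos t ht) (Real.exp_pos _).le hE (by linarith)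
end
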